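/- Let N be a positive natural number. Any family of pairwise distinct nonzero vectors (αᵢ)_{i∈I} in ℕ^N such that every two distinct nonnegative integer combinations ∑ᵢ mᵢαᵢ and ∑ᵢ lᵢαᵢ (with m, l finitely supported, m ≠ l) yield distinct sums, has cardinality at most N. -/

import Mathlib

theorem stmt3_general (N : ℕ) {I : Type*} (α : I → (Fin N → ℕ))
    (hinj : Function.Injective
      (fun m : I →₀ ℕ => m.sum (fun i c => c • α i))) :
    Cardinal.mk I ≤ N := by
  have hα : LinearIndependent ℕ α := hinj
  -- `ℕ` has the strong rank condition, as does every nontrivial commutative semiring.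
  simpa using hα.cardinalMk_le_finrank

/-- A family of pairwise distinct nonzero vectors in ℕ^N such that distinct
finitely supported nonnegative integer combinations have distinct sums has
cardinality at most N. -/
theorem stmt3 (N : ℕ) (hN : 0 < N) {I : Type*} (α : I → (Fin N → ℕ))
    (hnz : ∀ i, α i ≠ 0)
    (hdist : Function.Injective α)
    (hinj : Function.Injective
      (fun m : I →₀ ℕ => m.sum (fun i c => c • α i))) :
    Cardinal.mk I ≤ N :=
  stmt3_general N α hinj
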